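/- For any HT-trace M = ⟨H,T⟩, any path expression ρ, and any time points k, i: if (k,i) ∈ ‖ρ‖_M then (k,i) ∈ ‖ρ‖_{⟨T,T⟩}. -/

import Mathlib

open Classical

mutual
inductive Formula (A : Type) : Type
  | atom : A → Formula A
  | bot : Formula A
  | top : Formula A
  | box : PExp A → Formula A → Formula A
  | dia : PExp A → Formula A → Formula A
inductive PExp (A : Type) : Type
  | step : PExp A
  | test : Formula A → PExp A
  | plus : PExp A → PExp A → PExp A
  | seq : PExp A → PExp A → PExp A
  | star : PExp A → PExp A
  | conv : PExp A → PExp A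
end

/-- An HT-trace of length `len` (possibly infinite, `len = ⊤`). -/
structure HTTrace (A : Type) where
  len : ℕ∞
  H : ℕ → Set A
  T : ℕ → Set A
  sub : ∀ i, H i ⊆ T i

/-- The total trace ⟨T,T⟩ associated with M = ⟨H,T⟩. -/
def HTTrace.total {A : Type} (M : HTTrace A) : HTTrace A :=
  ⟨M.len, M.T, M.T, fun _ => le_refl _⟩

mutual
/-- DHT satisfaction M,k ⊨ φ. -/
def sat {A : Type} (M : HTTrace A) (k : ℕ) : Formula A → Prop
  | .atom a => a ∈ M.H k
  | .bot => False
  | .top => True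
  | .dia ρ φ => ∃ i, rel M ρ k i ∧ sat M i φ
  | .box ρ φ => (∀ i, rel M ρ k i → sat M i φ) ∧
                (∀ i, rel M.total ρ k i → sat M.total i φ)
/-- DHT accessibility relation ‖ρ‖_M. -/
def rel {A : Type} (M : HTTrace A) : PExp A → ℕ → ℕ → Prop
  | .step, k, i => i = k + 1 ∧ ((i : ℕ∞) < M.len)
  | .test φ, k, i => i = k ∧ sat M k φ
  | .plus ρ₁ ρ₂, k, i => rel M ρ₁ k i ∨ rel M ρ₂ k i
  | .seq ρ₁ ρ₂, k, i => ∃ j, rel M ρ₁ k j ∧ rel M ρ₂ j i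
  | .star ρ, k, i => Relation.ReflTransGen (fun a b => rel M ρ a b) k i
  | .conv ρ, k, i => rel M ρ i k
end

/-!
Satisfaction and accessibility are persistent together, by mutual induction on formulas and
path expressions: atoms use `H ⊆ T`, and a box already carries its `⟨T,T⟩` clause, which is
all a box needs in `⟨T,T⟩` because the total trace of `⟨T,T⟩` is `⟨T,T⟩` itself.
-/

mutual
theorem sat_total_of_sat {A : Type} (M : HTTrace A) (φ : Formula A) (k : ℕ)
    (h : sat M k φ) : sat M.total k φ := by
  cases φ with
  | atom a => exact M.sub k h
  | bot => exact h
  | top => trivial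
  | box ρ φ =>
    rw [sat] at h ⊢
    exact ⟨h.2, h.2⟩
  | dia ρ φ =>
    rw [sat] at h ⊢
    obtain ⟨i, hρ, hφ⟩ := h
    exact ⟨i, rel_total_of_rel M ρ k i hρ, sat_total_of_sat M φ i hφ⟩

theorem rel_total_of_rel {A : Type} (M : HTTrace A) (ρ : PExp A) (k i : ℕ)
    (h : rel M ρ k i) : rel M.total ρ k i := by
  cases ρ with
  | step => exact h
  | test φ =>
    rw [rel] at h ⊢
    exact ⟨h.1, sat_total_of_sat M φ k h.2⟩
  | plus ρ₁ ρ₂ =>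
    rw [rel] at h ⊢
    exact h.imp (rel_total_of_rel M ρ₁ k i) (rel_total_of_rel M ρ₂ k i)
  | seq ρ₁ ρ₂ =>
    rw [rel] at h ⊢
    obtain ⟨j, h₁, h₂⟩ := h
    exact ⟨j, rel_total_of_rel M ρ₁ k j h₁, rel_total_of_rel M ρ₂ j i h₂⟩
  | star ρ =>
    rw [rel] at h ⊢
    exact Relation.ReflTransGen.mono (rel_total_of_rel M ρ) k i h
  | conv ρ =>
    rw [rel] at h ⊢
    exact rel_total_of_rel M ρ i k h
end

/-- If (k,i) ∈ ‖ρ‖_M then (k,i) ∈ ‖ρ‖_{⟨T,T⟩}. -/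
theorem stmt1 {A : Type} (M : HTTrace A) (ρ : PExp A) (k i : ℕ)
    (h : rel M ρ k i) : rel M.total ρ k i :=
  rel_total_of_rel M ρ k i h
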